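/- The Wilson polynomial is symmetric in its four parameters: let n ∈ ℕ, z ∈ ℂ, t = (t1,t2,t3,t4) ∈ ℂ⁴, and let σ be a permutation of {1,2,3,4}. Assume that t1+tj ∉ {0,−1,…,−(n−1)} for j = 2,3,4 and also t_{σ(1)}+t_{σ(j)} ∉ {0,−1,…,−(n−1)} for j = 2,3,4 (so that both sides are defined). Then W_n(z; t1, t2, t3, t4) = W_n(z; t_{σ(1)}, t_{σ(2)}, t_{σ(3)}, t_{σ(4)}). -/

import Mathlib

/-!
Multiplying the prefactors of `wilson` into its sum gives `wilsonPoly`, which is visibly symmetric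
in `t2, t3, t4`. The symmetry `t1 ↔ t2` is Whipple's transformation of the balanced terminating
`₄F₃`: expand `(t1+z)_k (t1-z)_k` in the basis `(t2-z)_j (t2+z)_j` by the Pfaff–Saalschütz sum,
interchange the two summations, and evaluate the inner sum by Pfaff–Saalschütz once more. The
three adjacent transpositions generate the symmetric group on the four parameters.
-/

open Finset

/-- Pochhammer symbol `(a)_k = a (a+1) ⋯ (a+k-1)`. -/
noncomputable def poch (a : ℂ) (k : ℕ) : ℂ := ∏ i ∈ Finset.range k, (a + i)

/-- The Wilson polynomial `W_n(z; t1,t2,t3,t4)` in the variable `z` (with `x = -z²`). -/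
noncomputable def wilson (n : ℕ) (z t1 t2 t3 t4 : ℂ) : ℂ :=
  poch (t1 + t2) n * poch (t1 + t3) n * poch (t1 + t4) n *
    ∑ k ∈ Finset.range (n + 1),
      (poch (-(n : ℂ)) k * poch (t1 + t2 + t3 + t4 + (n : ℂ) - 1) k *
        poch (t1 + z) k * poch (t1 - z) k) /
      ((k.factorial : ℂ) * poch (t1 + t2) k * poch (t1 + t3) k * poch (t1 + t4) k)

@[simp] lemma poch_zero (a : ℂ) : poch a 0 = 1 := prod_range_zero _

lemma poch_succ (a : ℂ) (k : ℕ) : poch a (k + 1) = poch a k * (a + k) := prod_range_succ _ _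

lemma poch_add (a : ℂ) (m k : ℕ) : poch a (m + k) = poch a m * poch (a + m) k := by
  simp only [poch, prod_range_add, Nat.cast_add, add_assoc]

lemma poch_succ' (a : ℂ) (k : ℕ) : poch a (k + 1) = a * poch (a + 1) k := by
  rw [add_comm, poch_add]
  simp [poch]

lemma poch_eq_mul_poch_sub (a : ℂ) {k n : ℕ} (hk : k ≤ n) :
    poch a n = poch a k * poch (a + k) (n - k) := by
  rw [← poch_add, Nat.add_sub_cancel' hk]

lemma poch_reflect (a : ℂ) (k : ℕ) : poch a k = (-1) ^ k * poch (1 - a - k) k := by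
  induction k generalizing a with
  | zero => simp
  | succ k ih =>
    have shift : 1 - a - ((1 + k : ℕ) : ℂ) + (1 : ℕ) = 1 - a - k := by push_cast; ring
    rw [poch_succ, ih, add_comm k 1, poch_add, shift]
    simp only [poch, range_one, prod_singleton]
    push_cast
    ring

lemma poch_ne_zero {a : ℂ} {k : ℕ} (h : ∀ i < k, a + i ≠ 0) : poch a k ≠ 0 :=
  prod_ne_zero_iff.2 fun i hi => h i (mem_range.1 hi)

lemma poch_eq_eval_ascPochhammer (a : ℂ) (k : ℕ) : poch a k = (ascPochhammer ℂ k).eval a := by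
  induction k with
  | zero => simp
  | succ k ih => rw [poch_succ, ih, ascPochhammer_succ_eval]

lemma poch_neg_natCast (n k : ℕ) : poch (-n) k = (-1) ^ k * n.choose k * k.factorial := by
  rw [poch_eq_eval_ascPochhammer, ascPochhammer_eval_neg_eq_descPochhammer,
    descPochhammer_eval_eq_descFactorial, Nat.descFactorial_eq_factorial_mul_choose]
  push_cast
  ring

noncomputable def saalschutzTerm (a b c : ℂ) (n k : ℕ) : ℂ :=
  n.choose k * poch a k * poch b k * poch (c + k) (n - k) * poch (c - a - b) (n - k)

section Saalschutz

variable (a b c : ℂ) (n : ℕ)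

lemma saalschutzTerm_of_lt {k : ℕ} (hk : n < k) : saalschutzTerm a b c n k = 0 := by
  simp [saalschutzTerm, Nat.choose_eq_zero_of_lt hk]

lemma saalschutzTerm_succ_zero :
    saalschutzTerm a b c (n + 1) 0
      = ((c - a + n) * (c - b + n) - a * b) * saalschutzTerm a b c n 0 := by
  simp only [saalschutzTerm, Nat.choose_zero_right, Nat.sub_zero, poch_succ]
  push_cast
  ring

-- Summed over `k`, the `(a + k) * (b + k)` parts of this recurrence telescope.
lemma saalschutzTerm_succ_succ {k : ℕ} (hk : k ≤ n) :
    saalschutzTerm a b c (n + 1) (k + 1)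
      = ((c - a + n) * (c - b + n) - (a + (k + 1)) * (b + (k + 1))) *
          saalschutzTerm a b c n (k + 1)
        + (a + k) * (b + k) * saalschutzTerm a b c n k := by
  obtain ⟨m, rfl⟩ := Nat.exists_eq_add_of_le hk
  rcases m with _ | m
  · simp [saalschutzTerm, poch_succ]
    ring
  · have pascal := Nat.choose_succ_succ' (k + (m + 1)) k
    have absorb : ((k + (m + 1)).choose (k + 1) : ℂ) * (k + 1)
        = (k + (m + 1)).choose k * (m + 1) := by
      have := Nat.choose_succ_right_eq (k + (m + 1)) k
      rw [Nat.add_sub_cancel_left] at this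
      exact_mod_cast this
    have e : k + (m + 1) - (k + 1) = m := by omega
    simp only [saalschutzTerm, Nat.add_sub_add_right, Nat.add_sub_cancel_left, e]
    rw [pascal, poch_succ' (c + k), poch_succ a, poch_succ b, poch_succ (c + ↑(k + 1)) m,
      poch_succ (c - a - b) m]
    push_cast
    rw [← add_assoc c (k : ℂ) 1]
    linear_combination (-poch a k * poch b k * (a + k) * (b + k) * poch (c + k + 1) m *
      poch (c - a - b) m * (c - a - b + m)) * absorb

theorem saalschutz :
    ∑ k ∈ range (n + 1), saalschutzTerm a b c n k = poch (c - a) n * poch (c - b) n := by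
  induction n with
  | zero => simp [saalschutzTerm]
  | succ n ih =>
    set K := (c - a + n) * (c - b + n)
    set q : ℕ → ℂ := fun k => (a + k) * (b + k)
    calc ∑ k ∈ range (n + 2), saalschutzTerm a b c (n + 1) k
        = ∑ k ∈ range (n + 2), (K - q k) * saalschutzTerm a b c n k
            + ∑ k ∈ range (n + 1), q k * saalschutzTerm a b c n k := by
          rw [sum_range_succ', sum_range_succ' (fun k => (K - q k) * _),
            sum_congr rfl fun k hk => saalschutzTerm_succ_succ a b c n (mem_range_succ_iff.1 hk),
            saalschutzTerm_succ_zero, sum_add_distrib]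
          simp only [q, Nat.cast_add, Nat.cast_one, Nat.cast_zero, add_zero]
          ring
      _ = K * ∑ k ∈ range (n + 1), saalschutzTerm a b c n k := by
          rw [sum_range_succ, saalschutzTerm_of_lt a b c n n.lt_succ_self, mul_zero, add_zero,
            ← sum_add_distrib, mul_sum]
          exact sum_congr rfl fun k _ => by ring
      _ = poch (c - a) (n + 1) * poch (c - b) (n + 1) := by
          rw [ih, poch_succ, poch_succ]
          ring

end Saalschutz

theorem saalschutz' {A B V W : ℂ} (N : ℕ) (h : A + B = V + W + N - 1) :
    ∑ m ∈ range (N + 1), (-1) ^ m * N.choose m * poch A m * poch B m *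
        poch (V + m) (N - m) * poch (W + m) (N - m)
      = poch (V - B) N * poch (W - B) N := by
  calc _ = ∑ m ∈ range (N + 1), (-1) ^ N * saalschutzTerm A B W N m := by
        refine sum_congr rfl fun m hm => ?_
        have hmN : m ≤ N := mem_range_succ_iff.1 hm
        have balanced : 1 - (V + m) - ((N - m : ℕ) : ℂ) = W - A - B := by
          push_cast [Nat.cast_sub hmN]
          linear_combination h
        rw [poch_reflect (V + m), balanced, saalschutzTerm, ← Nat.add_sub_cancel' hmN, pow_add,
          Nat.add_sub_cancel_left]
        ring
    _ = poch (V - B) N * poch (W - B) N := by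
        have balanced : 1 - (V - B) - N = W - A := by linear_combination h
        rw [← mul_sum, saalschutz, poch_reflect (V - B), balanced]
        ring

lemma poch_add_mul_poch_sub_eq_sum (z t u : ℂ) (k : ℕ) :
    poch (t + z) k * poch (t - z) k
      = ∑ j ∈ range (k + 1), k.choose j * poch (u - z) j * poch (u + z) j *
          poch (t + u + j) (k - j) * poch (t - u) (k - j) := by
  have e₁ : t + u - (u - z) = t + z := by ring
  have e₂ : t + u - (u + z) = t - z := by ring
  have e₃ : t + u - (u - z) - (u + z) = t - u := by ring
  rw [← e₁, ← e₂, ← saalschutz]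
  simp only [saalschutzTerm, e₃]

/-- `wilson n z t u v w` with its prefactors multiplied into the sum. It agrees with `wilson`
whenever the denominators there do not vanish, and is a polynomial in all its arguments. -/
noncomputable def wilsonPoly (n : ℕ) (z t u v w : ℂ) : ℂ :=
  ∑ k ∈ range (n + 1), (-1) ^ k * n.choose k * poch (t + u + v + w + n - 1) k *
    poch (t + z) k * poch (t - z) k *
    poch (t + u + k) (n - k) * poch (t + v + k) (n - k) * poch (t + w + k) (n - k)

/-- The summand, at `k = j + m`, after expanding `poch (t + z) k * poch (t - z) k` in
`wilsonPoly n z t u v w` by `poch_add_mul_poch_sub_eq_sum`. -/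
noncomputable def searsTerm (n : ℕ) (z t u v w : ℂ) (j m : ℕ) : ℂ :=
  (-1) ^ (j + m) * n.choose (j + m) * (j + m).choose j * poch (t + u + v + w + n - 1) (j + m) *
    poch (u - z) j * poch (u + z) j * poch (t - u) m * poch (t + u + j) (n - j) *
    poch (t + v + j + m) (n - (j + m)) * poch (t + w + j + m) (n - (j + m))

section WilsonPoly

variable (n : ℕ) (z t u v w : ℂ)

lemma wilsonPoly_comm₂₃ : wilsonPoly n z t v u w = wilsonPoly n z t u v w := by
  unfold wilsonPoly
  rw [add_right_comm t v u]
  exact sum_congr rfl fun k _ => by ring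

lemma wilsonPoly_comm₃₄ : wilsonPoly n z t u w v = wilsonPoly n z t u v w := by
  unfold wilsonPoly
  rw [add_right_comm (t + u) w v]
  exact sum_congr rfl fun k _ => by ring

lemma wilsonPoly_eq_sum_sum_searsTerm :
    wilsonPoly n z t u v w
      = ∑ k ∈ range (n + 1), ∑ j ∈ range (k + 1), searsTerm n z t u v w j (k - j) := by
  refine sum_congr rfl fun k hk => ?_
  rw [mul_assoc _ (poch (t + z) k), mul_assoc _ _ (poch (t + u + k) (n - k)),
    poch_add_mul_poch_sub_eq_sum z t u, sum_mul, mul_sum, sum_mul, sum_mul]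
  refine sum_congr rfl fun j hj => ?_
  have hkn : k ≤ n := mem_range_succ_iff.1 hk
  obtain ⟨m, rfl⟩ := Nat.exists_eq_add_of_le (mem_range_succ_iff.1 hj)
  rw [searsTerm, Nat.add_sub_cancel_left, show n - j = m + (n - (j + m)) by omega,
    poch_add (t + u + j)]
  simp only [Nat.cast_add, ← add_assoc]
  ring

lemma sum_searsTerm {j : ℕ} (hj : j ≤ n) :
    ∑ m ∈ range (n + 1 - j), searsTerm n z t u v w j m
      = (-1) ^ j * n.choose j * poch (u + t + v + w + n - 1) j * poch (u + z) j * poch (u - z) j *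
          poch (u + t + j) (n - j) * poch (u + v + j) (n - j) * poch (u + w + j) (n - j) := by
  obtain ⟨N, rfl⟩ := Nat.exists_eq_add_of_le hj
  set s := t + u + v + w + ↑(j + N) - 1
  have hchoose (m : ℕ) :
      ((j + N).choose (j + m) : ℂ) * (j + m).choose j = (j + N).choose j * N.choose m := by
    have := Nat.choose_mul (n := j + N) (Nat.le_add_right j m)
    rw [Nat.add_sub_cancel_left, Nat.add_sub_cancel_left] at this
    exact_mod_cast this
  have factor : ∀ m ∈ range (N + 1), searsTerm (j + N) z t u v w j m
      = ((-1) ^ j * (j + N).choose j * poch s j * poch (u - z) j * poch (u + z) j *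
          poch (t + u + j) N) *
        ((-1) ^ m * N.choose m * poch (s + j) m * poch (t - u) m *
          poch (t + v + j + m) (N - m) * poch (t + w + j + m) (N - m)) := by
    intro m _
    rw [searsTerm, Nat.add_sub_cancel_left, Nat.add_sub_add_left, pow_add, poch_add]
    linear_combination (-1) ^ j * (-1) ^ m * poch s j * poch (s + j) m * poch (u - z) j *
      poch (u + z) j * poch (t - u) m * poch (t + u + j) N * poch (t + v + j + m) (N - m) *
      poch (t + w + j + m) (N - m) * hchoose m
  have balanced : (s + j) + (t - u) = (t + v + j) + (t + w + j) + N - 1 := by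
    simp only [s]
    push_cast
    ring
  rw [show j + N + 1 - j = N + 1 by omega, sum_congr rfl factor, ← mul_sum,
    saalschutz' N balanced, Nat.add_sub_cancel_left, add_comm u t]
  have e₁ : t + v + j - (t - u) = u + v + j := by ring
  have e₂ : t + w + j - (t - u) = u + w + j := by ring
  rw [e₁, e₂]
  ring

theorem wilsonPoly_comm₁₂ : wilsonPoly n z u t v w = wilsonPoly n z t u v w := by
  rw [wilsonPoly_eq_sum_sum_searsTerm n z t u v w, sum_range_diag_flip, wilsonPoly]
  exact sum_congr rfl fun j hj => (sum_searsTerm n z t u v w (mem_range_succ_iff.1 hj)).symm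

end WilsonPoly

theorem wilson_eq_wilsonPoly {n : ℕ} (z : ℂ) {t u v w : ℂ}
    (hu : ∀ i < n, t + u + i ≠ 0) (hv : ∀ i < n, t + v + i ≠ 0) (hw : ∀ i < n, t + w + i ≠ 0) :
    wilson n z t u v w = wilsonPoly n z t u v w := by
  rw [wilson, wilsonPoly, mul_sum]
  refine sum_congr rfl fun k hk => ?_
  have hkn : k ≤ n := mem_range_succ_iff.1 hk
  have nonzero {a : ℂ} (ha : ∀ i < n, a + i ≠ 0) : poch a k ≠ 0 :=
    poch_ne_zero fun i hi => ha i (hi.trans_le hkn)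
  have hu' := nonzero hu
  have hv' := nonzero hv
  have hw' := nonzero hw
  have hfac : (k.factorial : ℂ) ≠ 0 := Nat.cast_ne_zero.2 k.factorial_ne_zero
  rw [poch_neg_natCast, poch_eq_mul_poch_sub (t + u) hkn, poch_eq_mul_poch_sub (t + v) hkn,
    poch_eq_mul_poch_sub (t + w) hkn]
  field_simp

theorem wilsonPoly_perm (n : ℕ) (z : ℂ) (σ : Equiv.Perm (Fin 4)) (t : Fin 4 → ℂ) :
    wilsonPoly n z (t (σ 0)) (t (σ 1)) (t (σ 2)) (t (σ 3))
      = wilsonPoly n z (t 0) (t 1) (t 2) (t 3) := by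
  have hσ : σ ∈ Submonoid.closure (Set.range fun i : Fin 3 => Equiv.swap i.castSucc i.succ) := by
    rw [Equiv.Perm.mclosure_swap_castSucc_succ]
    trivial
  induction hσ using Submonoid.closure_induction generalizing t with
  | mem σ hσ =>
    obtain ⟨i, rfl⟩ := hσ
    fin_cases i
    · exact wilsonPoly_comm₁₂ ..
    · exact wilsonPoly_comm₂₃ ..
    · exact wilsonPoly_comm₃₄ ..
  | one => rfl
  | mul σ τ _ _ hσ hτ => exact (hτ (t ∘ σ)).trans (hσ t)

theorem wilson_parameter_symmetry (n : ℕ) (z : ℂ) (t : Fin 4 → ℂ) (σ : Equiv.Perm (Fin 4))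
    (h : ∀ j : Fin 4, j ≠ 0 → ∀ k : ℕ, k < n → t 0 + t j + (k : ℂ) ≠ 0)
    (hσ : ∀ j : Fin 4, j ≠ 0 → ∀ k : ℕ, k < n → t (σ 0) + t (σ j) + (k : ℂ) ≠ 0) :
    wilson n z (t 0) (t 1) (t 2) (t 3)
      = wilson n z (t (σ 0)) (t (σ 1)) (t (σ 2)) (t (σ 3)) := by
  rw [wilson_eq_wilsonPoly z (h 1 (by decide)) (h 2 (by decide)) (h 3 (by decide)),
    wilson_eq_wilsonPoly z (hσ 1 (by decide)) (hσ 2 (by decide)) (hσ 3 (by decide)),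
    wilsonPoly_perm]
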